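/- Let p be an odd prime, G a finite p-group, H ≤ G, and χ a character of H (element of Hom(H, C*)). Then in H³(G, Q/Z), using the Fulton–MacPherson identity Cores(z²) − Cores(z)² + 2·Cores^{(2)}(z) = 0 for z ∈ H¹(H,Q/Z), one has: c₂(Ind_H^G χ) = (1/2)(Cores_H^G(c₁(χ))² − Cores_H^G(c₁(χ)²)) + c₁(Ind_H^G 1)·Cores_H^G(c₁(χ)) + c₂(Ind_H^G 1). -/
import Mathlib


/-- Fulton–MacPherson's formula for the second Chern class of an induced representation,
after elimination of the intermediate transfer `Cores⁽²⁾`.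

We work abstractly in the (commutative) even-degree cohomology ring `A` of the finite
`p`-group `G` (with `p` odd), identifying `H^{2i}(G,ℤ) ≅ H^{2i-1}(G,ℚ/ℤ)`; every element of
this ring is killed by `p ^ k` for some fixed `k` (e.g. the exponent of `G`), and the factor
`1/2` means multiplication by the inverse `(p ^ k + 1)/2` of `2` on such torsion classes.
`cores` is the corestriction from the subgroup `H`, `cores2` is Fulton–MacPherson's
intermediate transfer `Cores⁽²⁾`, `c1χ = c₁(χ)`, `c2χ = c₂(χ)`, `c1Ind1 = c₁(Ind_H^G 1)`,
`c2Ind1 = c₂(Ind_H^G 1)` and `c2Indχ = c₂(Ind_H^G χ)`.  Given Fulton–MacPherson's formula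
for `c₂` of an induced representation and the identity
`Cores(z²) − Cores(z)² + 2·Cores⁽²⁾(z) = 0`, one gets
`c₂(Ind_H^G χ) = ½(Cores(c₁χ)² − Cores(c₁χ²)) + c₁(Ind_H^G 1)·Cores(c₁χ) + c₂(Ind_H^G 1)`. -/
theorem stmt15 (p k : ℕ) (hp : p.Prime) (hodd : Odd p)
    (A : Type) [CommRing A] (htor : ∀ x : A, (p ^ k) • x = 0)
    (cores cores2 : A → A)
    (c1χ c2χ c1Ind1 c2Ind1 c2Indχ : A)
    (hc2χ : c2χ = 0) (hcores0 : cores 0 = 0)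
    (hFM : c2Indχ = cores c2χ + cores2 c1χ + c1Ind1 * cores c1χ + c2Ind1)
    (hid : ∀ z : A, cores (z ^ 2) - (cores z) ^ 2 + 2 • cores2 z = 0) :
    c2Indχ = ((p ^ k + 1) / 2) • ((cores c1χ) ^ 2 - cores (c1χ ^ 2))
      + c1Ind1 * cores c1χ + c2Ind1 := by
  set m := (p ^ k + 1) / 2 with hm
  have hpk : Odd (p ^ k) := hodd.pow
  have h2m : 2 * m = p ^ k + 1 := by
    obtain ⟨t, ht⟩ := hpk
    omega
  have key : ∀ x : A, m • (2 • x) = x := by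
    intro x
    rw [smul_smul, Nat.mul_comm, h2m, add_smul, htor, one_smul, zero_add]
  have h2 : (2 : A) • cores2 c1χ = (cores c1χ) ^ 2 - cores (c1χ ^ 2) := by
    have := hid c1χ
    have h2' : (2 : ℕ) • cores2 c1χ = (cores c1χ) ^ 2 - cores (c1χ ^ 2) := by
      linear_combination this
    simpa using h2'
  have hc : cores2 c1χ = m • ((cores c1χ) ^ 2 - cores (c1χ ^ 2)) := by
    rw [← h2]
    have : ((2 : A) • cores2 c1χ) = (2 : ℕ) • cores2 c1χ := by simp
    rw [this, key]
  rw [hFM, hc2χ, hcores0, hc, zero_add]
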